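/- arXiv:2510.03849 — 3 statements merged into one kernel-verified Lean document; each statement's English description precedes it below -/
import Mathlib

section
/- Let φ : [0,∞) → [0,∞) be an N-function of class C¹([0,∞)) ∩ C²((0,∞)) with φ(0) = 0, φ'(0) = 0, φ' increasing and positive on (0,∞), satisfying p ≤ s·φ''(s)/φ'(s) + 1 ≤ q for all s > 0, where 1 < p ≤ q. For σ ≥ 0 let φ_σ be the shifted N-function, so that φ_σ'(s) = φ'(σ+s)·s/(σ+s). Then for every σ ≥ 0 and every s > 0, min{p,2} ≤ s·φ_σ''(s)/φ_σ'(s) + 1 ≤ max{q,2}. -/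
open MeasureTheory Real Set Filter
open scoped InnerProductSpace

/-- An N-function `φ` of class `C¹([0,∞)) ∩ C²((0,∞))` with (right) derivative `φ'`
and second derivative `φ''` on `(0,∞)`, satisfying `φ(0) = 0`, `φ'(0) = 0`, `φ'`
increasing and positive on `(0,∞)`, and the index condition
`p ≤ s·φ''(s)/φ'(s) + 1 ≤ q` for all `s > 0`. -/
structure IsNFun (φ φ' φ'' : ℝ → ℝ) (p q : ℝ) : Prop where
  map_zero : φ 0 = 0
  nonneg : ∀ s : ℝ, 0 ≤ s → 0 ≤ φ s
  hasDeriv : ∀ s ∈ Set.Ici (0:ℝ), HasDerivWithinAt φ (φ' s) (Set.Ici 0) s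
  derivCont : ContinuousOn φ' (Set.Ici 0)
  hasDeriv2 : ∀ s ∈ Set.Ioi (0:ℝ), HasDerivWithinAt φ' (φ'' s) (Set.Ioi 0) s
  deriv2Cont : ContinuousOn φ'' (Set.Ioi 0)
  deriv_zero : φ' 0 = 0
  deriv_mono : MonotoneOn φ' (Set.Ici 0)
  deriv_pos : ∀ s : ℝ, 0 < s → 0 < φ' s
  idx_low : ∀ s : ℝ, 0 < s → p ≤ s * φ'' s / φ' s + 1
  idx_high : ∀ s : ℝ, 0 < s → s * φ'' s / φ' s + 1 ≤ q

/-- The shifted N-function `φ_σ(s) = ∫₀^s φ'(σ+t)·t/(σ+t) dt`, expressed through the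
derivative `φ'` of `φ`. -/
noncomputable def shifted (φ' : ℝ → ℝ) (σ s : ℝ) : ℝ :=
  ∫ t in (0:ℝ)..s, φ' (σ + t) * t / (σ + t)

/-! Since `φ_σ'(t) = φ'(σ+t) · t/(σ+t)` and the factor `t ↦ t/(σ+t)` has index
`σ/(σ+t) + 1 ∈ [1, 2]`, the index of `φ_σ'` at `s` is the convex combination
`s/(σ+s) · (index of φ' at σ+s) + σ/(σ+s) · 2`, which lies between `min{p,2}` and `max{q,2}`. -/

theorem hasDerivAt_comp_add_mul_div {f : ℝ → ℝ} {a σ s : ℝ}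
    (hf : HasDerivAt f a (σ + s)) (hσs : σ + s ≠ 0) :
    HasDerivAt (fun t => f (σ + t) * t / (σ + t))
      (a * s / (σ + s) + f (σ + s) * σ / (σ + s) ^ 2) s := by
  have hshift : HasDerivAt (fun t => σ + t) 1 s := (hasDerivAt_id s).const_add σ
  have hnum : HasDerivAt (fun t => f (σ + t) * t) (a * s + f (σ + s) * 1) s :=
    (hf.comp_const_add σ s).mul (hasDerivAt_id' s)
  have hquot : HasDerivAt (fun t => f (σ + t) * t / (σ + t))
      (((a * s + f (σ + s) * 1) * (σ + s) - f (σ + s) * s * 1) / (σ + s) ^ 2) s :=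
    hnum.div hshift hσs
  exact hquot.congr_deriv (by field_simp; ring)

theorem index_comp_add_mul_div_eq_combo {a b σ s : ℝ} (hb : b ≠ 0) (hs : s ≠ 0)
    (hσs : σ + s ≠ 0) :
    s * (a * s / (σ + s) + b * σ / (σ + s) ^ 2) / (b * s / (σ + s)) + 1
      = s / (σ + s) * ((σ + s) * a / b + 1) + σ / (σ + s) * 2 := by
  field_simp
  ring

theorem shifted_index_condition_general (p q : ℝ) (φ φ' φ'' : ℝ → ℝ)
    (h : IsNFun φ φ' φ'' p q)
    (σ : ℝ) (hσ : 0 ≤ σ) (s : ℝ) (hs : 0 < s) (D : ℝ)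
    (hD : HasDerivWithinAt (fun t => φ' (σ + t) * t / (σ + t)) D (Set.Ioi 0) s) :
    min p 2 ≤ s * D / (φ' (σ + s) * s / (σ + s)) + 1 ∧
      s * D / (φ' (σ + s) * s / (σ + s)) + 1 ≤ max q 2 := by
  have hσs : 0 < σ + s := by linarith
  have hφ'' : HasDerivAt φ' (φ'' (σ + s)) (σ + s) :=
    (h.hasDeriv2 _ hσs).hasDerivAt (Ioi_mem_nhds hσs)
  have hD_eq : D = φ'' (σ + s) * s / (σ + s) + φ' (σ + s) * σ / (σ + s) ^ 2 :=
    (hD.hasDerivAt (Ioi_mem_nhds hs)).unique (hasDerivAt_comp_add_mul_div hφ'' hσs.ne')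
  set A := (σ + s) * φ'' (σ + s) / φ' (σ + s) + 1
  have hweights : s / (σ + s) + σ / (σ + s) = 1 := by field_simp; ring
  have hcombo : s * D / (φ' (σ + s) * s / (σ + s)) + 1
      = (s / (σ + s)) • A + (σ / (σ + s)) • (2 : ℝ) := by
    rw [hD_eq, index_comp_add_mul_div_eq_combo (h.deriv_pos _ hσs).ne' hs.ne' hσs.ne']
    rfl
  have hs_wt : 0 ≤ s / (σ + s) := by positivity
  have hσ_wt : 0 ≤ σ / (σ + s) := by positivity
  rw [hcombo]
  constructor
  · calc min p 2 ≤ min A 2 := min_le_min_right 2 (h.idx_low _ hσs)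
      _ ≤ _ := Convex.min_le_combo A 2 hs_wt hσ_wt hweights
  · calc _ ≤ max A 2 := Convex.combo_le_max A 2 hs_wt hσ_wt hweights
      _ ≤ max q 2 := max_le_max_right 2 (h.idx_high _ hσs)

/-- The index condition for the shifted N-function: if `φ` satisfies
`p ≤ s·φ''(s)/φ'(s) + 1 ≤ q` for all `s > 0` with `1 < p ≤ q`, and `φ_σ` is the shifted
N-function (so `φ_σ'(s) = φ'(σ+s)·s/(σ+s)` and `φ_σ''` is its derivative), then
`min{p,2} ≤ s·φ_σ''(s)/φ_σ'(s) + 1 ≤ max{q,2}` for all `σ ≥ 0`, `s > 0`. -/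
theorem shifted_index_condition (p q : ℝ) (φ φ' φ'' : ℝ → ℝ)
    (hp : 1 < p) (hpq : p ≤ q) (h : IsNFun φ φ' φ'' p q)
    (σ : ℝ) (hσ : 0 ≤ σ) (s : ℝ) (hs : 0 < s) (D : ℝ)
    (hD : HasDerivWithinAt (fun t => φ' (σ + t) * t / (σ + t)) D (Set.Ioi 0) s) :
    min p 2 ≤ s * D / (φ' (σ + s) * s / (σ + s)) + 1 ∧
      s * D / (φ' (σ + s) * s / (σ + s)) + 1 ≤ max q 2 :=
  shifted_index_condition_general p q φ φ' φ'' h σ hσ s hs D hD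
end

section
/- Let φ : [0,∞) → [0,∞) be an N-function of class C¹([0,∞)) ∩ C²((0,∞)) with φ(0) = 0, φ'(0) = 0, φ' increasing and positive on (0,∞), satisfying p ≤ s·φ''(s)/φ'(s) + 1 ≤ q for all s > 0, where 1 < p ≤ q. Then there exists a constant c = c(p,q) ≥ 1 such that, uniformly for all σ ≥ 0 and all s > 0: c⁻¹·φ_σ'(s)·s ≤ φ_σ(s) ≤ c·φ_σ'(s)·s; c⁻¹·φ''(σ+s)·s² ≤ φ_σ(s) ≤ c·φ''(σ+s)·s²; c⁻¹·φ(σ+s)·s²/(σ+s)² ≤ φ_σ(s) ≤ c·φ(σ+s)·s²/(σ+s)²; and c⁻¹·φ'(σ+s)·s²/(σ+s) ≤ φ_σ(s) ≤ c·φ'(σ+s)·s²/(σ+s). -/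
/-!
Write `u = σ + s`. The upper index bound makes `t ↦ φ'(t) t^{1-q}` antitone, so `φ'` is
doubling: `φ'(2x) ≤ 2^{q-1} φ'(x)`. For a nonnegative increasing doubling function `g`, the
integral `∫₀^s g` is comparable to `s g(s)`: bound `g` above by `g(s)` and below, on
`[s/2, s]`, by `g(s/2)`, which doubling bounds below by a fixed multiple of `g(s)`. Applied to
`g = φ'` this gives `φ(u) ∼ u φ'(u)`, and applied to the integrand `φ'(σ+t) t/(σ+t)` of `φ_σ`
it gives `φ_σ(s) ∼ φ'(u) s²/u`. The index condition `(p-1) φ'(u) ≤ u φ''(u) ≤ (q-1) φ'(u)`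
then turns `φ'(u) s²/u` into `φ''(u) s²`, and `φ(u) ∼ u φ'(u)` turns it into `φ(u) s²/u²`.
-/

open MeasureTheory Real Set intervalIntegral

section MonotoneIntegral

variable {g : ℝ → ℝ}

theorem integral_le_mul_of_monotoneOn {a b : ℝ} (hab : a ≤ b) (hg : MonotoneOn g (Icc a b)) :
    ∫ t in a..b, g t ≤ (b - a) * g b := by
  have hint : IntervalIntegrable g volume a b := (uIcc_of_le hab ▸ hg).intervalIntegrable
  simpa using integral_mono_on hab hint intervalIntegrable_const
    fun t ht => hg ht (right_mem_Icc.2 hab) ht.2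

theorem mul_le_integral_of_monotoneOn {a b : ℝ} (hab : a ≤ b) (hg : MonotoneOn g (Icc a b)) :
    (b - a) * g a ≤ ∫ t in a..b, g t := by
  have hint : IntervalIntegrable g volume a b := (uIcc_of_le hab ▸ hg).intervalIntegrable
  simpa using integral_mono_on hab intervalIntegrable_const hint
    fun t ht => hg (left_mem_Icc.2 hab) ht ht.1

theorem mul_le_integral_of_monotoneOn_of_le_mul_half {s K : ℝ} (hs : 0 ≤ s)
    (hg : MonotoneOn g (Icc 0 s)) (hg0 : 0 ≤ g 0) (hK : 0 ≤ K) (hgK : g s ≤ K * g (s / 2)) :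
    s * g s ≤ 2 * K * ∫ t in 0..s, g t := by
  have hs2 : 0 ≤ s / 2 := by positivity
  have hs2s : s / 2 ≤ s := half_le_self hs
  have hint (a b : ℝ) (ha : 0 ≤ a) (hab : a ≤ b) (hb : b ≤ s) : IntervalIntegrable g volume a b :=
    (uIcc_of_le hab ▸ hg.mono (Icc_subset_Icc ha hb)).intervalIntegrable
  have hsplit := integral_add_adjacent_intervals (hint 0 (s / 2) le_rfl hs2 hs2s)
    (hint (s / 2) s hs2 hs2s le_rfl)
  have hfirst : 0 ≤ ∫ t in 0..s / 2, g t := integral_nonneg hs2 fun t ht =>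
    hg0.trans (hg (left_mem_Icc.2 hs) ⟨ht.1, ht.2.trans hs2s⟩ ht.1)
  have hsecond := mul_le_integral_of_monotoneOn hs2s (hg.mono (Icc_subset_Icc_left hs2))
  calc s * g s ≤ s * (K * g (s / 2)) := mul_le_mul_of_nonneg_left hgK hs
    _ = 2 * K * ((s - s / 2) * g (s / 2)) := by ring
    _ ≤ 2 * K * ∫ t in s / 2..s, g t := by gcongr
    _ ≤ 2 * K * ∫ t in 0..s, g t := by gcongr; linarith

end MonotoneIntegral

theorem monotoneOn_div_const_add {σ : ℝ} (hσ : 0 ≤ σ) :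
    MonotoneOn (fun t => t / (σ + t)) (Ici 0) := by
  intro a ha b hb hab
  rcases (mem_Ici.1 ha).eq_or_lt with rfl | ha
  · simp only [zero_div]
    exact div_nonneg hb (by linarith [mem_Ici.1 hb])
  · rw [div_le_div_iff₀ (by linarith) (by linarith)]
    nlinarith

theorem inv_mul_le_and_le_mul_of_le_mul {ψ X a b c : ℝ} (hψ : 0 ≤ ψ) (hX : 0 ≤ X) (hc : 0 < c)
    (ha : a ≤ c) (hb : b ≤ c) (hXψ : X ≤ a * ψ) (hψX : ψ ≤ b * X) :
    c⁻¹ * X ≤ ψ ∧ ψ ≤ c * X :=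
  ⟨(inv_mul_le_iff₀ hc).2 (hXψ.trans (by gcongr)), hψX.trans (by gcongr)⟩

namespace IsNFun

variable {φ φ' φ'' : ℝ → ℝ} {p q : ℝ}

theorem deriv_nonneg (h : IsNFun φ φ' φ'' p q) {s : ℝ} (hs : 0 ≤ s) : 0 ≤ φ' s :=
  h.deriv_zero ▸ h.deriv_mono (mem_Ici.2 le_rfl) hs hs

theorem sub_one_mul_deriv_le (h : IsNFun φ φ' φ'' p q) {u : ℝ} (hu : 0 < u) :
    (p - 1) * φ' u ≤ u * φ'' u :=
  (le_div_iff₀ (h.deriv_pos u hu)).1 (by linarith [h.idx_low u hu])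

theorem mul_deriv2_le (h : IsNFun φ φ' φ'' p q) {u : ℝ} (hu : 0 < u) :
    u * φ'' u ≤ (q - 1) * φ' u :=
  (div_le_iff₀ (h.deriv_pos u hu)).1 (by linarith [h.idx_high u hu])

theorem antitoneOn_deriv_mul_rpow (h : IsNFun φ φ' φ'' p q) :
    AntitoneOn (fun t => φ' t * t ^ (1 - q)) (Ioi 0) := by
  refine antitoneOn_of_hasDerivWithinAt_nonpos (convex_Ioi 0)
    (f' := fun t => φ'' t * t ^ (1 - q) + φ' t * ((1 - q) * t ^ (1 - q - 1))) ?_ ?_ ?_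
  · exact (h.derivCont.mono Ioi_subset_Ici_self).mul
      fun t ht => (continuousAt_rpow_const t _ (Or.inl (ne_of_gt ht))).continuousWithinAt
  · rw [interior_Ioi]
    intro t ht
    exact (((h.hasDeriv2 t ht).hasDerivAt (Ioi_mem_nhds ht)).mul
      (hasDerivAt_rpow_const (Or.inl (ne_of_gt ht)))).hasDerivWithinAt
  · rw [interior_Ioi]
    intro t ht
    have ht' : 0 < t := ht
    have hfactor : φ'' t * t ^ (1 - q) + φ' t * ((1 - q) * t ^ (1 - q - 1))
        = t ^ (1 - q) / t * (t * φ'' t - (q - 1) * φ' t) := by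
      rw [rpow_sub_one ht'.ne']
      field_simp
      ring
    rw [hfactor]
    exact mul_nonpos_of_nonneg_of_nonpos (by positivity) (by linarith [h.mul_deriv2_le ht'])

theorem deriv_two_mul_le (h : IsNFun φ φ' φ'' p q) {x : ℝ} (hx : 0 < x) :
    φ' (2 * x) ≤ 2 ^ (q - 1) * φ' x := by
  have hanti : φ' (2 * x) * (2 * x) ^ (1 - q) ≤ φ' x * x ^ (1 - q) :=
    h.antitoneOn_deriv_mul_rpow (mem_Ioi.2 hx) (mem_Ioi.2 (by linarith : 0 < 2 * x))
    (by linarith)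
  rw [mul_rpow zero_le_two hx.le, ← mul_assoc] at hanti
  have hscaled : φ' (2 * x) * 2 ^ (1 - q) ≤ φ' x := le_of_mul_le_mul_right hanti (by positivity)
  rw [← neg_sub, rpow_neg zero_le_two, ← div_eq_mul_inv, div_le_iff₀ (by positivity)] at hscaled
  linarith

theorem eq_integral_deriv (h : IsNFun φ φ' φ'' p q) {u : ℝ} (hu : 0 ≤ u) :
    φ u = ∫ t in 0..u, φ' t := by
  rw [integral_eq_sub_of_hasDerivAt_of_le hu
    (fun t ht => (h.hasDeriv t ht.1).continuousWithinAt.mono Icc_subset_Ici_self)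
    (fun t ht => (h.hasDeriv t ht.1.le).hasDerivAt (Ici_mem_nhds ht.1))
    (uIcc_of_le hu ▸ h.deriv_mono.mono Icc_subset_Ici_self).intervalIntegrable,
    h.map_zero, sub_zero]

theorem le_mul_deriv (h : IsNFun φ φ' φ'' p q) {u : ℝ} (hu : 0 ≤ u) : φ u ≤ u * φ' u := by
  simpa [← h.eq_integral_deriv hu] using
    integral_le_mul_of_monotoneOn hu (h.deriv_mono.mono Icc_subset_Ici_self)

theorem mul_deriv_le (h : IsNFun φ φ' φ'' p q) {u : ℝ} (hu : 0 < u) :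
    u * φ' u ≤ 2 ^ q * φ u := by
  have hdoubling : φ' u ≤ 2 ^ (q - 1) * φ' (u / 2) := by
    simpa [mul_div_cancel₀] using h.deriv_two_mul_le (half_pos hu)
  have := mul_le_integral_of_monotoneOn_of_le_mul_half hu.le
    (h.deriv_mono.mono Icc_subset_Ici_self) (h.deriv_nonneg le_rfl) (by positivity) hdoubling
  rwa [← h.eq_integral_deriv hu.le, rpow_sub_one two_ne_zero, mul_div_cancel₀ _ two_ne_zero]
    at this

theorem monotoneOn_shiftedIntegrand (h : IsNFun φ φ' φ'' p q) {σ : ℝ} (hσ : 0 ≤ σ) :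
    MonotoneOn (fun t => φ' (σ + t) * t / (σ + t)) (Ici 0) := by
  simp_rw [mul_div_assoc]
  exact MonotoneOn.mul
    (fun a ha b hb hab => h.deriv_mono (add_nonneg hσ ha) (add_nonneg hσ hb) (by linarith))
    (monotoneOn_div_const_add hσ) (fun t ht => h.deriv_nonneg (add_nonneg hσ ht))
    (fun t ht => div_nonneg ht (add_nonneg hσ ht))

theorem shiftedIntegrand_le_mul_half (h : IsNFun φ φ' φ'' p q) {σ s : ℝ} (hσ : 0 ≤ σ)
    (hs : 0 < s) :
    φ' (σ + s) * s / (σ + s) ≤ 2 ^ q * (φ' (σ + s / 2) * (s / 2) / (σ + s / 2)) := by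
  have hderiv : φ' (σ + s) ≤ 2 ^ (q - 1) * φ' (σ + s / 2) :=
    (h.deriv_mono (by simp; linarith) (by simp; linarith) (by linarith)).trans
      (h.deriv_two_mul_le (by linarith : 0 < σ + s / 2))
  have hratio : s / (σ + s) ≤ 2 * (s / 2 / (σ + s / 2)) := by
    rw [mul_div_assoc', mul_div_cancel₀ _ two_ne_zero]
    exact div_le_div_of_nonneg_left hs.le (by linarith) (by linarith)
  calc φ' (σ + s) * s / (σ + s) = φ' (σ + s) * (s / (σ + s)) := mul_div_assoc _ _ _
    _ ≤ 2 ^ (q - 1) * φ' (σ + s / 2) * (2 * (s / 2 / (σ + s / 2))) := by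
        gcongr
        exact mul_nonneg (by positivity) (h.deriv_nonneg (by linarith))
    _ = 2 ^ q * (φ' (σ + s / 2) * (s / 2) / (σ + s / 2)) := by
        rw [rpow_sub_one two_ne_zero]; ring

theorem shifted_le (h : IsNFun φ φ' φ'' p q) {σ s : ℝ} (hσ : 0 ≤ σ) (hs : 0 ≤ s) :
    shifted φ' σ s ≤ φ' (σ + s) * s ^ 2 / (σ + s) := by
  have := integral_le_mul_of_monotoneOn hs
    ((h.monotoneOn_shiftedIntegrand hσ).mono Icc_subset_Ici_self)
  rw [shifted]
  convert this using 1
  ring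

theorem le_shifted (h : IsNFun φ φ' φ'' p q) {σ s : ℝ} (hσ : 0 ≤ σ) (hs : 0 < s) :
    φ' (σ + s) * s ^ 2 / (σ + s) ≤ 2 ^ (q + 1) * shifted φ' σ s := by
  have := mul_le_integral_of_monotoneOn_of_le_mul_half hs.le
    ((h.monotoneOn_shiftedIntegrand hσ).mono Icc_subset_Ici_self) (by simp) (by positivity)
    (h.shiftedIntegrand_le_mul_half hσ hs)
  rw [shifted]
  convert this using 1
  · ring
  · rw [rpow_add_one two_ne_zero]; ring

theorem deriv2_mul_sq_bounds (h : IsNFun φ φ' φ'' p q) {u : ℝ} (hu : 0 < u) (s : ℝ) :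
    (p - 1) * (φ' u * s ^ 2 / u) ≤ φ'' u * s ^ 2 ∧
      φ'' u * s ^ 2 ≤ (q - 1) * (φ' u * s ^ 2 / u) := by
  have e : φ'' u * s ^ 2 = u * φ'' u * s ^ 2 / u := by field_simp
  simp only [e, mul_div_assoc', ← mul_assoc]
  exact ⟨by gcongr ?_ * _ / _; exact h.sub_one_mul_deriv_le hu,
    by gcongr ?_ * _ / _; exact h.mul_deriv2_le hu⟩

theorem mul_sq_div_sq_bounds (h : IsNFun φ φ' φ'' p q) {u : ℝ} (hu : 0 < u) (s : ℝ) :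
    φ u * s ^ 2 / u ^ 2 ≤ φ' u * s ^ 2 / u ∧
      φ' u * s ^ 2 / u ≤ 2 ^ q * (φ u * s ^ 2 / u ^ 2) := by
  have e : φ' u * s ^ 2 / u = u * φ' u * s ^ 2 / u ^ 2 := by field_simp
  simp only [e, mul_div_assoc', ← mul_assoc]
  exact ⟨by gcongr ?_ * _ / _; exact h.le_mul_deriv hu.le,
    by gcongr ?_ * _ / _; exact h.mul_deriv_le hu⟩

end IsNFun

/-- Equivalences for the shifted N-function, uniform in the shift `σ ≥ 0`:
`φ_σ(s) ∼ φ_σ'(s)·s ∼ φ''(σ+s)·s² ∼ φ(σ+s)·s²/(σ+s)² ∼ φ'(σ+s)·s²/(σ+s)`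
with constants depending only on `p, q`. -/
theorem shifted_equivalences (p q : ℝ) (φ φ' φ'' : ℝ → ℝ)
    (hp : 1 < p) (hpq : p ≤ q) (h : IsNFun φ φ' φ'' p q) :
    ∃ c : ℝ, 1 ≤ c ∧ ∀ σ : ℝ, 0 ≤ σ → ∀ s : ℝ, 0 < s →
      (c⁻¹ * (φ' (σ + s) * s / (σ + s) * s) ≤ shifted φ' σ s ∧
        shifted φ' σ s ≤ c * (φ' (σ + s) * s / (σ + s) * s)) ∧
      (c⁻¹ * (φ'' (σ + s) * s ^ 2) ≤ shifted φ' σ s ∧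
        shifted φ' σ s ≤ c * (φ'' (σ + s) * s ^ 2)) ∧
      (c⁻¹ * (φ (σ + s) * s ^ 2 / (σ + s) ^ 2) ≤ shifted φ' σ s ∧
        shifted φ' σ s ≤ c * (φ (σ + s) * s ^ 2 / (σ + s) ^ 2)) ∧
      (c⁻¹ * (φ' (σ + s) * s ^ 2 / (σ + s)) ≤ shifted φ' σ s ∧
        shifted φ' σ s ≤ c * (φ' (σ + s) * s ^ 2 / (σ + s))) := by
  have hq : 1 ≤ q := by linarith
  have h2q : 1 ≤ (2 : ℝ) ^ q := one_le_rpow one_le_two (by linarith)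
  have h2q1 : (2 : ℝ) ^ (q + 1) = 2 * 2 ^ q := by rw [rpow_add_one two_ne_zero]; ring
  have hpinv : 0 < (p - 1)⁻¹ := inv_pos.2 (by linarith)
  set c := q * 2 ^ (q + 1) + (p - 1)⁻¹
  have hc1 : 1 ≤ c := by nlinarith
  have hc2q1 : 2 ^ (q + 1) ≤ c := by nlinarith
  refine ⟨c, hc1, fun σ hσ s hs => ?_⟩
  have hu : 0 < σ + s := by linarith
  set G := φ' (σ + s) * s ^ 2 / (σ + s)
  have hG : 0 ≤ G := div_nonneg (mul_nonneg (h.deriv_nonneg hu.le) (sq_nonneg s)) hu.le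
  have hψG := h.shifted_le hσ hs.le
  have hGψ := h.le_shifted hσ hs
  have hψ : 0 ≤ shifted φ' σ s := nonneg_of_mul_nonneg_right (hG.trans hGψ) (by positivity)
  obtain ⟨hGX, hXG⟩ := h.deriv2_mul_sq_bounds hu s
  obtain ⟨hYG, hGY⟩ := h.mul_sq_div_sq_bounds hu s
  have hGbounds := inv_mul_le_and_le_mul_of_le_mul hψ hG (by linarith) hc2q1 hc1 hGψ
    (by linarith)
  refine ⟨by convert hGbounds using 3 <;> ring, ?_, ?_, hGbounds⟩
  · have hψX : shifted φ' σ s ≤ (p - 1)⁻¹ * (φ'' (σ + s) * s ^ 2) := by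
      rw [inv_mul_eq_div, le_div_iff₀ (by linarith)]
      nlinarith
    exact inv_mul_le_and_le_mul_of_le_mul hψ (by nlinarith) (by linarith)
      (a := (q - 1) * 2 ^ (q + 1)) (by nlinarith) (by nlinarith) (by nlinarith) hψX
  · exact inv_mul_le_and_le_mul_of_le_mul hψ (by nlinarith) (by linarith) hc2q1 (by nlinarith)
      (hYG.trans hGψ) (hψG.trans hGY)
end

section
/- Let 1 < p ≤ q, a ≥ 0, and set H(s) = s^p + a·s^q with H''(s) = p(p−1)s^{p−2} + a·q(q−1)s^{q−2}. Let A : ℝ^{N×n} → ℝ^{N×n} be differentiable and suppose that for all ξ, λ ∈ ℝ^{N×n} the ellipticity condition [DA(ξ)λ] : λ ≥ ν·H''(1+|ξ|)·|λ|² holds for some ν > 0, where DA(ξ) is the derivative of A at ξ. Then there exists ν̃ > 0 depending only on p, q, ν such that for all ξ₁, ξ₂ ∈ ℝ^{N×n}: (A(ξ₁) − A(ξ₂)) : (ξ₁ − ξ₂) ≥ ν̃·H''(1+|ξ₁|+|ξ₂|)·|ξ₁−ξ₂|². -/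
open MeasureTheory Real Set
open scoped InnerProductSpace

/-- Second derivative `H''(s) = p(p−1)s^{p−2} + a·q(q−1)s^{q−2}` of the double phase
function `H(s) = s^p + a·s^q`. -/
noncomputable def dpH'' (p q a s : ℝ) : ℝ :=
  p * (p - 1) * s ^ (p - 2) + a * q * (q - 1) * s ^ (q - 2)

/-! Along the segment `ξₜ = ξ₂ + t (ξ₁ - ξ₂)` the derivative of `t ↦ ⟪A ξₜ, ξ₁ - ξ₂⟫` is
`⟪DA(ξₜ)(ξ₁ - ξ₂), ξ₁ - ξ₂⟫ ≥ ν H''(1 + |ξₜ|) |ξ₁ - ξ₂|² ≥ 0`. If `|ξ₂| ≤ |ξ₁|`, then on the last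
quarter `t ∈ [3/4, 1]` of the segment `1 + |ξₜ|` lies between `S/4` and `S = 1 + |ξ₁| + |ξ₂|`,
and every power `s ^ α` with `α ≤ q - 2` changes by at most the factor `min 1 (4 ^ (2 - q))`
on `[S/4, S]`. So the derivative is at least `ν min 1 (4 ^ (2 - q)) H''(S) |ξ₁ - ξ₂|²` on an
interval of length `1/4`, which gives `ν̃ = ν min 1 (4 ^ (2 - q)) / 4`. -/

lemma dpH''_nonneg {p q a s : ℝ} (hp : 1 ≤ p) (hpq : p ≤ q) (ha : 0 ≤ a) (hs : 0 ≤ s) :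
    0 ≤ dpH'' p q a s := by
  have hq : 1 ≤ q := hp.trans hpq
  unfold dpH''
  have := rpow_nonneg hs (p - 2)
  have := rpow_nonneg hs (q - 2)
  have : 0 ≤ p * (p - 1) := mul_nonneg (by linarith) (by linarith)
  have : 0 ≤ a * q * (q - 1) := mul_nonneg (mul_nonneg ha (by linarith)) (by linarith)
  positivity

lemma mul_rpow_le_rpow_of_div_le {k α β s t : ℝ} (hk : 1 ≤ k) (hαβ : α ≤ β) (hs : 0 < s)
    (hst : s / k ≤ t) (hts : t ≤ s) :
    min 1 (k ^ (-β)) * s ^ α ≤ t ^ α := by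
  have hs_rpow := rpow_nonneg hs.le α
  rcases le_or_gt 0 α with hα | hα
  · calc min 1 (k ^ (-β)) * s ^ α ≤ k ^ (-α) * s ^ α := by
          gcongr
          exact (min_le_right _ _).trans (rpow_le_rpow_of_exponent_le hk (by linarith))
      _ = (s / k) ^ α := by
          rw [div_rpow hs.le (by linarith), rpow_neg (by linarith), inv_mul_eq_div]
      _ ≤ t ^ α := rpow_le_rpow (by positivity) hst hα
  · calc min 1 (k ^ (-β)) * s ^ α ≤ s ^ α := mul_le_of_le_one_left hs_rpow (min_le_left _ _)
      _ ≤ t ^ α := rpow_le_rpow_of_nonpos ((div_pos hs (by linarith)).trans_le hst) hts hα.le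

lemma mul_dpH''_le_dpH''_of_div_le {p q a k s t : ℝ} (hp : 1 ≤ p) (hpq : p ≤ q) (ha : 0 ≤ a)
    (hk : 1 ≤ k) (hs : 0 < s) (hst : s / k ≤ t) (hts : t ≤ s) :
    min 1 (k ^ (2 - q)) * dpH'' p q a s ≤ dpH'' p q a t := by
  have hq : 1 ≤ q := hp.trans hpq
  have hp_rpow := mul_rpow_le_rpow_of_div_le hk (by linarith : p - 2 ≤ q - 2) hs hst hts
  have hq_rpow := mul_rpow_le_rpow_of_div_le hk (le_refl (q - 2)) hs hst hts
  rw [neg_sub] at hp_rpow hq_rpow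
  have hcp : 0 ≤ p * (p - 1) := mul_nonneg (by linarith) (by linarith)
  have hcq : 0 ≤ a * q * (q - 1) := mul_nonneg (mul_nonneg ha (by linarith)) (by linarith)
  unfold dpH''
  nlinarith [mul_le_mul_of_nonneg_left hp_rpow hcp, mul_le_mul_of_nonneg_left hq_rpow hcq]

lemma mul_sub_le_sub_of_hasDerivAt {g g' : ℝ → ℝ} {a b c m : ℝ}
    (hg : ∀ t, HasDerivAt g (g' t) t) (hg'_nonneg : ∀ t, 0 ≤ g' t)
    (hg'_ge : ∀ t ∈ Ioo b c, m ≤ g' t) (hab : a ≤ b) (hbc : b ≤ c) :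
    m * (c - b) ≤ g c - g a := by
  have hg_diff : Differentiable ℝ g := fun t => (hg t).differentiableAt
  have hmono : g a ≤ g b :=
    monotone_of_deriv_nonneg hg_diff (fun t => (hg t).deriv ▸ hg'_nonneg t) hab
  have hslope : m * (c - b) ≤ g c - g b := by
    refine (convex_Icc b c).mul_sub_le_image_sub_of_le_deriv hg_diff.continuous.continuousOn
      hg_diff.differentiableOn (fun t ht => ?_) b (left_mem_Icc.2 hbc) c (right_mem_Icc.2 hbc) hbc
    rw [interior_Icc] at ht
    exact (hg t).deriv ▸ hg'_ge t ht
  linarith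

section Segment

variable {E : Type*} [SeminormedAddCommGroup E] [NormedSpace ℝ E]

lemma norm_add_smul_sub_le {x y : E} {t : ℝ} (ht : t ∈ Icc (0 : ℝ) 1) :
    ‖y + t • (x - y)‖ ≤ ‖x‖ + ‖y‖ := by
  obtain ⟨ht0, ht1⟩ := ht
  calc ‖y + t • (x - y)‖ = ‖(1 - t) • y + t • x‖ := by congr 1; module
    _ ≤ (1 - t) * ‖y‖ + t * ‖x‖ := by
        refine (norm_add_le _ _).trans_eq ?_
        rw [norm_smul, norm_smul, norm_of_nonneg (by linarith), norm_of_nonneg ht0]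
    _ ≤ ‖x‖ + ‖y‖ := by nlinarith [norm_nonneg x, norm_nonneg y]

lemma add_div_four_le_norm_add_smul_sub {x y : E} (hyx : ‖y‖ ≤ ‖x‖) {t : ℝ}
    (ht : t ∈ Icc (3 / 4 : ℝ) 1) :
    (‖x‖ + ‖y‖) / 4 ≤ ‖y + t • (x - y)‖ := by
  obtain ⟨ht0, ht1⟩ := ht
  have hdist : ‖x - (y + t • (x - y))‖ = (1 - t) * ‖x - y‖ := by
    rw [show x - (y + t • (x - y)) = (1 - t) • (x - y) by module, norm_smul,
      norm_of_nonneg (by linarith)]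
  have := norm_sub_norm_le x (y + t • (x - y))
  nlinarith [norm_sub_le x y, norm_nonneg (x - y)]

end Segment

section Ellipticity

variable {E : Type*} [NormedAddCommGroup E] [InnerProductSpace ℝ E]

lemma hasDerivAt_inner_comp_add_smul {A : E → E} {x v : E} {t : ℝ}
    (hA : DifferentiableAt ℝ A (x + t • v)) :
    HasDerivAt (fun s : ℝ => ⟪A (x + s • v), v⟫_ℝ) ⟪fderiv ℝ A (x + t • v) v, v⟫_ℝ t := by
  have hline : HasDerivAt (fun s : ℝ => x + s • v) v t := by
    simpa using ((hasDerivAt_id t).smul_const v).const_add x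
  simpa using (hA.hasFDerivAt.comp_hasDerivAt t hline).inner ℝ (hasDerivAt_const t v)

theorem inner_sub_sub_ge_of_fderiv_inner_ge {w : ℝ → ℝ} {c : ℝ}
    (hw : ∀ s, 1 ≤ s → 0 ≤ w s) (hwc : ∀ s t, 1 ≤ s → s / 4 ≤ t → t ≤ s → c * w s ≤ w t)
    {A : E → E} (hA : Differentiable ℝ A)
    (hell : ∀ ξ l : E, w (1 + ‖ξ‖) * ‖l‖ ^ 2 ≤ ⟪fderiv ℝ A ξ l, l⟫_ℝ) (x y : E) :
    c / 4 * w (1 + ‖x‖ + ‖y‖) * ‖x - y‖ ^ 2 ≤ ⟪A x - A y, x - y⟫_ℝ := by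
  wlog hyx : ‖y‖ ≤ ‖x‖ generalizing x y
  · have := this y x (le_of_not_ge hyx)
    rwa [add_right_comm, norm_sub_rev, ← neg_sub x y, ← neg_sub (A x) (A y), inner_neg_neg]
      at this
  set S := 1 + ‖x‖ + ‖y‖
  have hderiv (t : ℝ) := hasDerivAt_inner_comp_add_smul (v := x - y) (hA (y + t • (x - y)))
  have hbound : ∀ t ∈ Ioo (3 / 4 : ℝ) 1,
      c * w S * ‖x - y‖ ^ 2 ≤ ⟪fderiv ℝ A (y + t • (x - y)) (x - y), x - y⟫_ℝ := by
    intro t ht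
    have ht' := Ioo_subset_Icc_self ht
    have hup := norm_add_smul_sub_le (x := x) (y := y) ⟨by linarith [ht'.1], ht'.2⟩
    have hlow := add_div_four_le_norm_add_smul_sub hyx ht'
    refine le_trans ?_ (hell _ _)
    gcongr
    exact hwc S _ (by simp only [S]; linarith [norm_nonneg x, norm_nonneg y]) (by simp only [S]; linarith) (by simp only [S]; linarith)
  have key := mul_sub_le_sub_of_hasDerivAt hderiv
    (fun t => (mul_nonneg (hw _ (by simp)) (sq_nonneg _)).trans (hell _ _)) hbound
    (by norm_num : (0 : ℝ) ≤ 3 / 4) (by norm_num)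
  simp only [zero_smul, add_zero, one_smul, add_sub_cancel] at key
  rw [inner_sub_left]
  linarith

end Ellipticity

/-- **Monotonicity from ellipticity.** If `A : ℝ^{N×n} → ℝ^{N×n}` is differentiable and
`[DA(ξ)λ] : λ ≥ ν·H''(1+|ξ|)·|λ|²` for all `ξ, λ`, where `H(s) = s^p + a·s^q`
with `1 < p ≤ q`, `a ≥ 0`, then there is `ν̃ > 0` depending only on `p, q, ν` with
`(A(ξ₁) − A(ξ₂)) : (ξ₁ − ξ₂) ≥ ν̃·H''(1+|ξ₁|+|ξ₂|)·|ξ₁−ξ₂|²` for all `ξ₁, ξ₂`. -/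
theorem monotonicity_from_ellipticity (N n : ℕ) (p q ν : ℝ)
    (hp : 1 < p) (hpq : p ≤ q) (hν : 0 < ν) :
    ∃ ν' : ℝ, 0 < ν' ∧ ∀ a : ℝ, 0 ≤ a →
      ∀ A : EuclideanSpace ℝ (Fin N × Fin n) → EuclideanSpace ℝ (Fin N × Fin n),
        Differentiable ℝ A →
        (∀ ξ lam : EuclideanSpace ℝ (Fin N × Fin n),
          ν * dpH'' p q a (1 + ‖ξ‖) * ‖lam‖ ^ 2 ≤ ⟪(fderiv ℝ A ξ) lam, lam⟫_ℝ) →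
        ∀ ξ₁ ξ₂ : EuclideanSpace ℝ (Fin N × Fin n),
          ν' * dpH'' p q a (1 + ‖ξ₁‖ + ‖ξ₂‖) * ‖ξ₁ - ξ₂‖ ^ 2 ≤
            ⟪A ξ₁ - A ξ₂, ξ₁ - ξ₂⟫_ℝ := by
  set c := min 1 ((4 : ℝ) ^ (2 - q))
  have hc : 0 < c := lt_min one_pos (rpow_pos_of_pos (by norm_num) _)
  refine ⟨ν * c / 4, by positivity, fun a ha A hA hell ξ₁ ξ₂ => ?_⟩
  have hw (s : ℝ) (hs : 1 ≤ s) : 0 ≤ ν * dpH'' p q a s :=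
    mul_nonneg hν.le (dpH''_nonneg hp.le hpq ha (by linarith))
  have hwc (s t : ℝ) (hs : 1 ≤ s) (hst : s / 4 ≤ t) (hts : t ≤ s) :
      c * (ν * dpH'' p q a s) ≤ ν * dpH'' p q a t := by
    rw [mul_left_comm]
    exact mul_le_mul_of_nonneg_left
      (mul_dpH''_le_dpH''_of_div_le hp.le hpq ha (by norm_num) (by linarith) hst hts) hν.le
  have := inner_sub_sub_ge_of_fderiv_inner_ge hw hwc hA hell ξ₁ ξ₂
  calc ν * c / 4 * dpH'' p q a (1 + ‖ξ₁‖ + ‖ξ₂‖) * ‖ξ₁ - ξ₂‖ ^ 2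
      = c / 4 * (ν * dpH'' p q a (1 + ‖ξ₁‖ + ‖ξ₂‖)) * ‖ξ₁ - ξ₂‖ ^ 2 := by ring
    _ ≤ _ := this
end
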